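/- If t = u holds in the monoid SJω, then there exist n, m ∈ ℕ such that c^n t = c^m u holds in SKω, where c is the circle element. -/

import Mathlib

/-- Generators of the monoid `SKω`: cups `δ_k`, caps `γ_k` and crossings `σ_k`,
indexed by positive natural numbers. -/
inductive SKGen : Type
  | cup : ℕ+ → SKGen
  | cap : ℕ+ → SKGen
  | cross : ℕ+ → SKGen

open FreeMonoid in
/-- The defining relations of the monoid `SKω`. -/
inductive SKRel : FreeMonoid SKGen → FreeMonoid SKGen → Prop
  | cup (j k : ℕ+) (h : j ≤ k) :
      SKRel (of (.cup k) * of (.cup j)) (of (.cup j) * of (.cup (k + 2)))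
  | cap (j k : ℕ+) (h : j ≤ k) :
      SKRel (of (.cap j) * of (.cap k)) (of (.cap (k + 2)) * of (.cap j))
  | cup_cap_one (j k : ℕ+) (h : j ≤ k) :
      SKRel (of (.cup (k + 2)) * of (.cap j)) (of (.cap j) * of (.cup k))
  | cap_cup_one (j k : ℕ+) (h : j ≤ k) :
      SKRel (of (.cup j) * of (.cap (k + 2))) (of (.cap k) * of (.cup j))
  | cup_cap (i : ℕ+) :
      SKRel (of (.cup i) * of (.cap (i + 1))) 1
  | sigma (j k : ℕ+) (h : j ≤ k) :
      SKRel (of (.cross (k + 2)) * of (.cross j)) (of (.cross j) * of (.cross (k + 2)))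
  | sigma_two (i : ℕ+) :
      SKRel (of (.cross i) * of (.cross i)) 1
  | sigma_three (i : ℕ+) :
      SKRel (of (.cross (i + 1)) * of (.cross i) * of (.cross (i + 1)))
            (of (.cross i) * of (.cross (i + 1)) * of (.cross i))
  | sigma_cup_one (j k : ℕ+) (h : j ≤ k) :
      SKRel (of (.cup (k + 2)) * of (.cross j)) (of (.cross j) * of (.cup (k + 2)))
  | sigma_cup_two (j k : ℕ+) (h : j ≤ k) :
      SKRel (of (.cup j) * of (.cross (k + 2))) (of (.cross k) * of (.cup j))
  | sigma_cup_three (i : ℕ+) :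
      SKRel (of (.cup i) * of (.cross i)) (of (.cup i))
  | sigma_cup_four (i : ℕ+) :
      SKRel (of (.cup (i + 1)) * of (.cross i)) (of (.cup i) * of (.cross (i + 1)))
  | sigma_cap_one (j k : ℕ+) (h : j ≤ k) :
      SKRel (of (.cross j) * of (.cap (k + 2))) (of (.cap (k + 2)) * of (.cross j))
  | sigma_cap_two (j k : ℕ+) (h : j ≤ k) :
      SKRel (of (.cross (k + 2)) * of (.cap j)) (of (.cap j) * of (.cross k))
  | sigma_cap_three (i : ℕ+) :
      SKRel (of (.cross i) * of (.cap i)) (of (.cap i))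
  | sigma_cap_four (i : ℕ+) :
      SKRel (of (.cross i) * of (.cap (i + 1))) (of (.cross (i + 1)) * of (.cap i))

/-- The monoid `SKω`, presented by cups, caps and crossings with the monoid, cup-cap,
σ, σ-cup and σ-cap equations. -/
def SKomega : Type := PresentedMonoid SKRel

instance : Monoid SKomega := by unfold SKomega; infer_instance

/-- The cup generator `δ_k` of `SKω`. -/
def SKomega.cup (k : ℕ+) : SKomega := PresentedMonoid.of SKRel (SKGen.cup k)

/-- The cap generator `γ_k` of `SKω`. -/
def SKomega.cap (k : ℕ+) : SKomega := PresentedMonoid.of SKRel (SKGen.cap k)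

/-- The crossing generator `σ_k` of `SKω`. -/
def SKomega.cross (k : ℕ+) : SKomega := PresentedMonoid.of SKRel (SKGen.cross k)


/-- The circle element `c = δ_1 γ_1` of `SKω`. -/
def SKomega.circle : SKomega := SKomega.cup 1 * SKomega.cap 1

/-- The congruence on `SKω` generated by the additional equation `c = 1`. -/
def SJCon : Con SKomega := conGen (fun x y => x = SKomega.circle ∧ y = 1)

/-- The monoid `SJω`, obtained from `SKω` by imposing the additional equation `c = 1`. -/
def SJomega : Type := SJCon.Quotient

instance : Monoid SJomega := by unfold SJomega; infer_instance

/-- The canonical projection from `SKω` onto `SJω`. -/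
def toSJ : SKomega →* SJomega := SJCon.mk'

/-! Since `c` is central, "`cⁿ x = cᵐ y` for some `n, m`" is already a congruence; it relates
`c` to `1`, so it contains the congruence defining `SJω`. Centrality of `δ₁γ₁` comes from
sliding a generator past `δ₁` and then `γ₁` using the relations with `j = 1`. -/

def centralPowersCon {M : Type*} [Monoid M] (c : M) (hc : ∀ x, Commute c x) : Con M where
  r x y := ∃ n m : ℕ, c ^ n * x = c ^ m * y
  iseqv :=
    { refl _ := ⟨0, 0, rfl⟩
      symm := fun ⟨n, m, e⟩ => ⟨m, n, e.symm⟩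
      trans := fun {x y z} ⟨n, m, e₁⟩ ⟨p, q, e₂⟩ =>
        ⟨p + n, m + q, calc
          c ^ (p + n) * x = c ^ p * (c ^ m * y) := by rw [pow_add, mul_assoc, e₁]
          _ = c ^ m * (c ^ q * z) := by rw [← mul_assoc, ← pow_add, add_comm, pow_add,
                                            mul_assoc, e₂]
          _ = c ^ (m + q) * z := by rw [← mul_assoc, ← pow_add]⟩ }
  mul' := fun {x _ y _} ⟨n, m, e₁⟩ ⟨p, q, e₂⟩ => by
    have split : ∀ (a b : ℕ) (s r : M), c ^ (a + b) * (s * r) = c ^ a * s * (c ^ b * r) :=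
      fun a b s r => by
        rw [pow_add, mul_assoc, ← mul_assoc (c ^ b), ((hc s).pow_left b).eq, mul_assoc s,
          ← mul_assoc]
    exact ⟨n + p, m + q, by rw [split, split, e₁, e₂]⟩

theorem conGen_eq_one_le_centralPowersCon {M : Type*} [Monoid M] (c : M)
    (hc : ∀ x, Commute c x) :
    conGen (fun x y => x = c ∧ y = 1) ≤ centralPowersCon c hc :=
  Con.conGen_le.2 fun _ _ ⟨hx, hy⟩ => ⟨0, 1, by simp [hx, hy]⟩

namespace SKomega

theorem cup_mul_cup {j k : ℕ+} (h : j ≤ k) : cup k * cup j = cup j * cup (k + 2) :=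
  PresentedMonoid.mk_eq_mk_of_rel (SKRel.cup j k h)

theorem cap_mul_cap {j k : ℕ+} (h : j ≤ k) : cap j * cap k = cap (k + 2) * cap j :=
  PresentedMonoid.mk_eq_mk_of_rel (SKRel.cap j k h)

theorem cup_add_two_mul_cap {j k : ℕ+} (h : j ≤ k) : cup (k + 2) * cap j = cap j * cup k :=
  PresentedMonoid.mk_eq_mk_of_rel (SKRel.cup_cap_one j k h)

theorem cup_mul_cap_add_two {j k : ℕ+} (h : j ≤ k) : cup j * cap (k + 2) = cap k * cup j :=
  PresentedMonoid.mk_eq_mk_of_rel (SKRel.cap_cup_one j k h)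

theorem cup_mul_cross_add_two {j k : ℕ+} (h : j ≤ k) : cup j * cross (k + 2) = cross k * cup j :=
  PresentedMonoid.mk_eq_mk_of_rel (SKRel.sigma_cup_two j k h)

theorem cross_add_two_mul_cap {j k : ℕ+} (h : j ≤ k) : cross (k + 2) * cap j = cap j * cross k :=
  PresentedMonoid.mk_eq_mk_of_rel (SKRel.sigma_cap_two j k h)

theorem commute_circle_cup (k : ℕ+) : Commute circle (cup k) := by
  have hk : 1 ≤ k := one_le
  calc cup 1 * cap 1 * cup k = cup 1 * (cup (k + 2) * cap 1) := by
        rw [cup_add_two_mul_cap hk, mul_assoc]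
    _ = cup k * (cup 1 * cap 1) := by rw [← mul_assoc, ← cup_mul_cup hk, mul_assoc]

theorem commute_circle_cap (k : ℕ+) : Commute circle (cap k) := by
  have hk : 1 ≤ k := one_le
  calc cup 1 * cap 1 * cap k = cup 1 * cap (k + 2) * cap 1 := by
        rw [mul_assoc, cap_mul_cap hk, mul_assoc]
    _ = cap k * (cup 1 * cap 1) := by rw [cup_mul_cap_add_two hk, mul_assoc]

theorem commute_circle_cross (k : ℕ+) : Commute circle (cross k) := by
  have hk : 1 ≤ k := one_le
  calc cup 1 * cap 1 * cross k = cup 1 * cross (k + 2) * cap 1 := by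
        rw [mul_assoc, ← cross_add_two_mul_cap hk, mul_assoc]
    _ = cross k * (cup 1 * cap 1) := by rw [cup_mul_cross_add_two hk, mul_assoc]

theorem commute_circle (x : SKomega) : Commute circle x := by
  suffices h : Submonoid.closure (Set.range (PresentedMonoid.of SKRel)) ≤
      Submonoid.centralizer {circle} by
    rw [PresentedMonoid.closure_range_of] at h
    exact Submonoid.mem_centralizer_iff.1 (h trivial) circle rfl
  refine Submonoid.closure_le.2 ?_
  rintro _ ⟨g, rfl⟩
  refine Submonoid.mem_centralizer_iff.2 fun _ hc => (Set.mem_singleton_iff.1 hc) ▸ ?_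
  cases g with
  | cup k => exact commute_circle_cup k
  | cap k => exact commute_circle_cap k
  | cross k => exact commute_circle_cross k

end SKomega

/-- If `t = u` holds in `SJω`, then there are `n, m ∈ ℕ` such that `cⁿ t = cᵐ u` holds
in `SKω`, where `c` is the circle element. -/
theorem sjomega_eq_iff_circle_powers (t u : SKomega) (h : toSJ t = toSJ u) :
    ∃ n m : ℕ, SKomega.circle ^ n * t = SKomega.circle ^ m * u :=
  conGen_eq_one_le_centralPowersCon _ SKomega.commute_circle ((Con.eq SJCon).1 h)
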